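/- arXiv:2512.06541 — 7 statements merged into one kernel-verified Lean document; each statement's English description precedes it below -/
import Mathlib

section
/- Fix positive integers s, t, α with α ≤ min s t, and work in ℚ. Set v = (s+1)*(s*t+α)/α, k = s*(t+1), f = s*t*(s*t+s+t+1) / (α*(s+t+1−α)), and g = s*(s*t+α)*(s+1−α) / (α*(s+t+1−α)). Then v^3 * (k * (v − 1 − k)) / (f * g) = v^2 * ((s : ℚ) + t + 1 − α)^2. -/
set_option maxHeartbeats 1000000


/-- Proposition 3.1: the Frame number of the point scheme of a partial
geometry `pg(s,t,α)` is `v³·k(v−1−k)/(fg) = v²(s+t+1−α)²`. -/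
theorem stmt_5 (s t α : ℕ) (hs : 0 < s) (ht : 0 < t) (hα : 0 < α)
    (hmin : α ≤ min s t) :
    let v : ℚ := ((s : ℚ) + 1) * ((s : ℚ) * t + α) / α
    let k : ℚ := (s : ℚ) * ((t : ℚ) + 1)
    let f : ℚ := (s : ℚ) * t * ((s : ℚ) * t + s + t + 1) /
      ((α : ℚ) * ((s : ℚ) + t + 1 - α))
    let g : ℚ := (s : ℚ) * ((s : ℚ) * t + α) * ((s : ℚ) + 1 - α) /
      ((α : ℚ) * ((s : ℚ) + t + 1 - α))
    v ^ 3 * (k * (v - 1 - k)) / (f * g) = v ^ 2 * ((s : ℚ) + t + 1 - α) ^ 2 := by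
  intro v k f g
  have hαs : α ≤ s := le_trans hmin (min_le_left _ _)
  have hαt : α ≤ t := le_trans hmin (min_le_right _ _)
  have hsQ : (0:ℚ) < s := by exact_mod_cast hs
  have htQ : (0:ℚ) < t := by exact_mod_cast ht
  have hαQ : (0:ℚ) < α := by exact_mod_cast hα
  have hαsQ : (α:ℚ) ≤ s := by exact_mod_cast hαs
  have h1 : (α:ℚ) ≠ 0 := ne_of_gt hαQ
  have h2 : (s:ℚ) + t + 1 - α ≠ 0 := by nlinarith
  have h3 : (s:ℚ) + 1 - α ≠ 0 := by nlinarith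
  have h4 : (s:ℚ) ≠ 0 := ne_of_gt hsQ
  have h5 : (t:ℚ) ≠ 0 := ne_of_gt htQ
  have h6 : (s:ℚ) * t + α ≠ 0 := by positivity
  have h7 : (s:ℚ) * t + s + t + 1 ≠ 0 := by positivity
  simp only [v, k, f, g]
  field_simp
  ring
end

section
/- Fix positive integers s, t, α with α ≤ min s t, and a positive integer v with α * v = (s+1) * (s*t + α). Set k = s*(t+1), λ = s − 1 + t*(α − 1), μ = α*(t+1). Let G be a simple graph on Fin v with G.IsSRGWith v k λ μ. For a prime p, let A := G.adjMatrix (ZMod p), let J be the all-ones matrix in Matrix (Fin v) (Fin v) (ZMod p), and let 𝒜 be the (ZMod p)-subalgebra of Matrix (Fin v) (Fin v) (ZMod p) whose underlying submodule is the span of {1, A, J}. Then 𝒜 is a semisimple ring if and only if p does not divide v and p does not divide s + t + 1 − α. -/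
open Matrix

-- auxiliary: a ring containing a nonzero central square-zero element is not semisimple
lemma aux_nilpotent_not_ss {R : Type*} [Ring R] (x : R) (hc : ∀ y, x * y = y * x)
    (h2 : x * x = 0) (h0 : x ≠ 0) : ¬ IsSemisimpleRing R := by
  intro hss
  obtain ⟨e, he, hIe⟩ := IsSemisimpleRing.ideal_eq_span_idempotent (Ideal.span {x})
  have hxI : x ∈ Ideal.span ({e} : Set R) := hIe ▸ Ideal.subset_span rfl
  have heI : e ∈ Ideal.span ({x} : Set R) := by
    rw [hIe]; exact Ideal.subset_span rfl
  rw [Ideal.mem_span_singleton'] at hxI heI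
  obtain ⟨a, ha⟩ := hxI
  obtain ⟨b, hb⟩ := heI
  have he0 : e = 0 := by
    calc e = e * e := he.symm
    _ = (b * x) * (b * x) := by rw [hb]
    _ = b * (x * b) * x := by rw [mul_assoc, mul_assoc, mul_assoc]
    _ = b * (b * x) * x := by rw [hc b]
    _ = b * b * (x * x) := by rw [mul_assoc, mul_assoc, mul_assoc]
    _ = 0 := by rw [h2, mul_zero]
  exact h0 (by rw [← ha, he0, mul_zero])

set_option maxHeartbeats 2000000 in
set_option synthInstance.maxHeartbeats 400000 in
/-- Corollary 3.2: the modular adjacency algebra `𝔽_p𝒴` of the point scheme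
of a partial geometry `pg(s,t,α)` is semisimple iff `p ∤ v` and
`p ∤ (s+t+1−α)`. -/
theorem stmt_6 (s t α v : ℕ) (hs : 0 < s) (ht : 0 < t) (hα : 0 < α)
    (hmin : α ≤ min s t) (hv : 0 < v)
    (hveq : α * v = (s + 1) * (s * t + α))
    (G : SimpleGraph (Fin v)) [DecidableRel G.Adj]
    (hG : G.IsSRGWith v (s * (t + 1)) (s - 1 + t * (α - 1)) (α * (t + 1)))
    (p : ℕ) (hp : p.Prime) [Fact p.Prime]
    (𝒜 : Subalgebra (ZMod p) (Matrix (Fin v) (Fin v) (ZMod p)))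
    (h𝒜 : Subalgebra.toSubmodule 𝒜 =
      Submodule.span (ZMod p)
        {(1 : Matrix (Fin v) (Fin v) (ZMod p)), G.adjMatrix (ZMod p),
          Matrix.of fun _ _ => (1 : ZMod p)}) :
    IsSemisimpleRing 𝒜 ↔ ¬ p ∣ v ∧ ¬ p ∣ (s + t + 1 - α) := by
  classical
  have hαs : α ≤ s := le_trans hmin (min_le_left _ _)
  set A := G.adjMatrix (ZMod p) with hAdef
  set J : Matrix (Fin v) (Fin v) (ZMod p) := Matrix.of (fun _ _ => (1 : ZMod p)) with hJdef
  have hmem : ∀ x : Matrix (Fin v) (Fin v) (ZMod p),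
      x ∈ 𝒜 ↔ x ∈ Submodule.span (ZMod p) {(1 : Matrix (Fin v) (Fin v) (ZMod p)), A, J} := by
    intro x
    rw [← Subalgebra.mem_toSubmodule, h𝒜]
  have hAmem : A ∈ 𝒜 := (hmem A).2 (Submodule.subset_span (by simp))
  have hJmem : J ∈ 𝒜 := (hmem J).2 (Submodule.subset_span (by simp))
  -- basic matrix relations
  have hcompl : Gᶜ.adjMatrix (ZMod p) = J - 1 - A := by
    ext i j
    by_cases h : i = j
    · subst h
      simp [hAdef, hJdef]
    · by_cases hadj : G.Adj i j <;>
        simp [SimpleGraph.compl_adj, h, hadj, Matrix.one_apply, hAdef, hJdef]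
  have hAJ : A * J = ((s : ZMod p) * ((t : ZMod p) + 1)) • J := by
    ext i j
    rw [hAdef, SimpleGraph.adjMatrix_mul_apply]
    simp only [hJdef, Matrix.of_apply, Finset.sum_const, nsmul_eq_mul, mul_one,
      Matrix.smul_apply, smul_eq_mul]
    rw [show (G.neighborFinset i).card = G.degree i from rfl, hG.regular i]
    push_cast
    ring
  have hJA : J * A = ((s : ZMod p) * ((t : ZMod p) + 1)) • J := by
    ext i j
    rw [hAdef, SimpleGraph.mul_adjMatrix_apply]
    simp only [hJdef, Matrix.of_apply, Finset.sum_const, nsmul_eq_mul, mul_one,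
      Matrix.smul_apply, smul_eq_mul]
    rw [show (G.neighborFinset j).card = G.degree j from rfl, hG.regular j]
    push_cast
    ring
  have hJJ : J * J = ((v : ZMod p)) • J := by
    ext i j
    rw [Matrix.mul_apply]
    simp [hJdef]
  have hM := hG.matrix_eq (α := ZMod p)
  rw [hcompl, pow_two] at hM
  simp only [← Nat.cast_smul_eq_nsmul (ZMod p)] at hM
  have hA2 : A * A = (((s : ZMod p) - α) * ((t : ZMod p) + 1)) • 1
      + ((s : ZMod p) - 1 - t - α) • A + ((α : ZMod p) * ((t : ZMod p) + 1)) • J := by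
    rw [hM]
    match_scalars <;>
    · push_cast [Nat.cast_sub hs, Nat.cast_sub hα]
      ring
  have hveqF : (α : ZMod p) * v = ((s : ZMod p) + 1) * ((s : ZMod p) * t + α) := by
    exact_mod_cast congrArg (fun n : ℕ => (n : ZMod p)) hveq
  -- existence of adjacent and non-adjacent pairs
  have i0 : Fin v := ⟨0, hv⟩
  have hadjpair : ∃ a b : Fin v, G.Adj a b := by
    have h1 : 0 < G.degree i0 := by rw [hG.regular i0]; positivity
    rw [← SimpleGraph.card_neighborFinset_eq_degree, Finset.card_pos] at h1
    obtain ⟨b, hb⟩ := h1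
    exact ⟨i0, b, (SimpleGraph.mem_neighborFinset _ _ _).1 hb⟩
  have hk1v : s * (t + 1) + 1 < v := by
    have h2 : α * (s * (t + 1) + 1) < α * v := by
      rw [hveq]
      have h1 : α * (s * t) ≤ s * (s * t) := Nat.mul_le_mul_right _ hαs
      have h2 : 0 < s * t := Nat.mul_pos hs ht
      nlinarith [h1, h2]
    exact lt_of_mul_lt_mul_left h2 (Nat.zero_le α)
  have hnadjpair : ∃ a b : Fin v, a ≠ b ∧ ¬ G.Adj a b := by
    by_contra h
    push_neg at h
    have hsub : Finset.univ.erase i0 ⊆ G.neighborFinset i0 := by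
      intro x hx
      rw [SimpleGraph.mem_neighborFinset]
      exact (h x i0 (Finset.ne_of_mem_erase hx)).symm
    have := Finset.card_le_card hsub
    rw [Finset.card_erase_of_mem (Finset.mem_univ _), Finset.card_univ, Fintype.card_fin,
      SimpleGraph.card_neighborFinset_eq_degree, hG.regular i0] at this
    omega
  have hJne : J ≠ 0 := by
    intro h
    have := congrFun (congrFun h i0) i0
    simp [hJdef] at this
  have hNne : ∀ a b : ZMod p, A - a • 1 - b • J ≠ 0 := by
    intro a b h
    by_cases hb : b = 0
    · obtain ⟨i, j, hij⟩ := hadjpair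
      have := congrFun (congrFun h i) j
      simp [hAdef, hJdef, hb, Matrix.one_apply, hij, G.ne_of_adj hij] at this
    · obtain ⟨i, j, hij, hnadj⟩ := hnadjpair
      have := congrFun (congrFun h i) j
      simp [hAdef, hJdef, Matrix.one_apply, hij, hnadj] at this
      exact hb this
  -- the master product formula
  have hprod : ∀ a b a' b' : ZMod p,
      (A - a • 1 - b • J) * (A - a' • 1 - b' • J)
        = ((((s : ZMod p) - α) * ((t : ZMod p) + 1)) + a * a') •
            (1 : Matrix (Fin v) (Fin v) (ZMod p))
          + (((s : ZMod p) - 1 - t - α) - a - a') • A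
          + (((α : ZMod p) * ((t : ZMod p) + 1)) + a * b' + a' * b + b * b' * v
              - (b + b') * ((s : ZMod p) * ((t : ZMod p) + 1))) • J := by
    intro a b a' b'
    simp only [sub_mul, mul_sub, smul_mul_assoc, mul_smul_comm, one_mul, mul_one]
    rw [hA2, hAJ, hJA, hJJ]
    match_scalars <;> ring
  -- commutativity of the algebra
  have hcommS : ∀ x ∈ 𝒜, ∀ y ∈ 𝒜, x * y = y * x := by
    intro x hx y hy
    rw [hmem] at hx hy
    refine Submodule.span_induction₂
      (p := fun x y _ _ => x * y = y * x) ?_ ?_ ?_ ?_ ?_ ?_ ?_ hx hy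
    · intro u w hu hw
      simp only [Set.mem_insert_iff, Set.mem_singleton_iff] at hu hw
      rcases hu with rfl | rfl | rfl <;> rcases hw with rfl | rfl | rfl <;>
        simp [hAJ, hJA]
    · intro y hy; simp
    · intro x hx; simp
    · intro a b z _ _ _ h1 h2; rw [add_mul, mul_add, h1, h2]
    · intro a b z _ _ _ h1 h2; rw [mul_add, add_mul, h1, h2]
    · intro r a b _ _ h; rw [smul_mul_assoc, mul_smul_comm, h]
    · intro r a b _ _ h; rw [mul_smul_comm, smul_mul_assoc, h]
  have hnotss : ∀ x : Matrix (Fin v) (Fin v) (ZMod p), x ∈ 𝒜 → x * x = 0 → x ≠ 0 →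
      ¬ IsSemisimpleRing 𝒜 := by
    intro x hx hx2 hx0
    apply aux_nilpotent_not_ss (⟨x, hx⟩ : 𝒜)
    · intro y
      exact Subtype.ext (hcommS x hx y.1 y.2)
    · exact Subtype.ext hx2
    · intro h
      exact hx0 (congrArg Subtype.val h)
  constructor
  · -- semisimple → conditions
    intro hss
    have hndvd_v : ¬ p ∣ v := by
      intro hpv
      refine hnotss J hJmem ?_ hJne hss
      rw [hJJ, (ZMod.natCast_eq_zero_iff v p).2 hpv, zero_smul]
    refine ⟨hndvd_v, ?_⟩
    intro hpD
    have hVne : (v : ZMod p) ≠ 0 := fun h =>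
      hndvd_v ((ZMod.natCast_eq_zero_iff v p).1 h)
    have hD0 : (s : ZMod p) + t + 1 - α = 0 := by
      have hcast : ((s + t + 1 - α : ℕ) : ZMod p) = (s : ZMod p) + t + 1 - α := by
        push_cast [Nat.cast_sub (show α ≤ s + t + 1 by omega)]
        ring
      rw [← hcast, ZMod.natCast_eq_zero_iff]
      exact hpD
    set c : ZMod p := (v : ZMod p)⁻¹ * (((s : ZMod p) + 1) * ((t : ZMod p) + 1)) with hcdef
    have hc1 : c * v = ((s : ZMod p) + 1) * ((t : ZMod p) + 1) := by
      rw [hcdef]; field_simp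
    have hc2 : c * ((s : ZMod p) * t + α) = (α : ZMod p) * ((t : ZMod p) + 1) := by
      rw [hcdef]; field_simp
      linear_combination -((t : ZMod p) + 1) * hveqF
    have hNsq : (A - (-((t : ZMod p) + 1)) • 1 - c • J) *
        (A - (-((t : ZMod p) + 1)) • 1 - c • J) = 0 := by
      rw [hprod]
      match_scalars
      · linear_combination ((t : ZMod p) + 1) * hD0
      · linear_combination hD0
      · linear_combination c * hc1 - hc2 - c * hD0
    refine hnotss _ ?_ hNsq (hNne _ _) hss
    exact sub_mem (sub_mem hAmem (𝒜.smul_mem (one_mem 𝒜) _)) (𝒜.smul_mem hJmem _)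
  · -- conditions → semisimple
    rintro ⟨h1, h2⟩
    have hVne : (v : ZMod p) ≠ 0 := fun h =>
      h1 ((ZMod.natCast_eq_zero_iff v p).1 h)
    have hDne : (s : ZMod p) + t + 1 - α ≠ 0 := by
      have hcast : ((s + t + 1 - α : ℕ) : ZMod p) = (s : ZMod p) + t + 1 - α := by
        push_cast [Nat.cast_sub (show α ≤ s + t + 1 by omega)]
        ring
      rw [← hcast, Ne, ZMod.natCast_eq_zero_iff]
      exact h2
    set c : ZMod p := (v : ZMod p)⁻¹ * (((s : ZMod p) + 1) * ((t : ZMod p) + 1)) with hcdef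
    have hc1 : c * v = ((s : ZMod p) + 1) * ((t : ZMod p) + 1) := by
      rw [hcdef]; field_simp
    have hc2 : c * ((s : ZMod p) * t + α) = (α : ZMod p) * ((t : ZMod p) + 1) := by
      rw [hcdef]; field_simp
      linear_combination -((t : ZMod p) + 1) * hveqF
    set c' : ZMod p := (v : ZMod p)⁻¹ * ((s : ZMod p) * t + α) with hc'def
    have hc'1 : c' * v = (s : ZMod p) * t + α := by
      rw [hc'def]; field_simp
    have hc'2 : c' * (((s : ZMod p) + 1) * ((t : ZMod p) + 1))
        = (α : ZMod p) * ((t : ZMod p) + 1) := by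
      rw [hc'def]; field_simp
      linear_combination -((t : ZMod p) + 1) * hveqF
    set N : Matrix (Fin v) (Fin v) (ZMod p) :=
      A - (-((t : ZMod p) + 1)) • 1 - c • J with hNdef
    set N' : Matrix (Fin v) (Fin v) (ZMod p) :=
      A - ((s : ZMod p) - α) • 1 - c' • J with hN'def
    have hNN : N * N = ((s : ZMod p) + t + 1 - α) • N := by
      rw [hNdef, hprod]
      match_scalars
      · ring
      · ring
      · linear_combination c * hc1 - hc2
    have hN'N' : N' * N' = (-((s : ZMod p) + t + 1 - α)) • N' := by
      rw [hN'def, hprod]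
      match_scalars
      · ring
      · ring
      · linear_combination c' * hc'1 - hc'2
    have hNN' : N * N' = 0 := by
      rw [hNdef, hN'def, hprod]
      match_scalars
      · ring
      · ring
      · linear_combination c * hc'1 - hc'2
    have hN'N : N' * N = 0 := by
      rw [hNdef, hN'def, hprod]
      match_scalars
      · ring
      · ring
      · linear_combination c * hc'1 - hc'2
    have hNJ : N * J = 0 := by
      rw [hNdef]
      simp only [sub_mul, smul_mul_assoc, one_mul]
      rw [hAJ, hJJ]
      match_scalars
      linear_combination -hc1
    have hJN : J * N = 0 := by
      rw [hNdef]
      simp only [mul_sub, mul_smul_comm, mul_one]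
      rw [hJA, hJJ]
      match_scalars
      linear_combination -hc1
    have hN'J : N' * J = 0 := by
      rw [hN'def]
      simp only [sub_mul, smul_mul_assoc, one_mul]
      rw [hAJ, hJJ]
      match_scalars
      linear_combination -hc'1
    have hJN' : J * N' = 0 := by
      rw [hN'def]
      simp only [mul_sub, mul_smul_comm, mul_one]
      rw [hJA, hJJ]
      match_scalars
      linear_combination -hc'1
    set E0 : Matrix (Fin v) (Fin v) (ZMod p) := (v : ZMod p)⁻¹ • J with hE0
    set E1 : Matrix (Fin v) (Fin v) (ZMod p) :=
      ((s : ZMod p) + t + 1 - α)⁻¹ • N with hE1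
    set E2 : Matrix (Fin v) (Fin v) (ZMod p) :=
      (-((s : ZMod p) + t + 1 - α))⁻¹ • N' with hE2
    have hDne' : -((s : ZMod p) + t + 1 - α) ≠ 0 := neg_ne_zero.2 hDne
    have hE00 : E0 * E0 = E0 := by
      rw [hE0, smul_mul_assoc, mul_smul_comm, hJJ, smul_smul, smul_smul]
      congr 1
      field_simp
    have hE01 : E0 * E1 = 0 := by
      rw [hE0, hE1, smul_mul_assoc, mul_smul_comm, hJN, smul_zero, smul_zero]
    have hE02 : E0 * E2 = 0 := by
      rw [hE0, hE2, smul_mul_assoc, mul_smul_comm, hJN', smul_zero, smul_zero]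
    have hE10 : E1 * E0 = 0 := by
      rw [hE0, hE1, smul_mul_assoc, mul_smul_comm, hNJ, smul_zero, smul_zero]
    have hE20 : E2 * E0 = 0 := by
      rw [hE0, hE2, smul_mul_assoc, mul_smul_comm, hN'J, smul_zero, smul_zero]
    have hE12 : E1 * E2 = 0 := by
      rw [hE1, hE2, smul_mul_assoc, mul_smul_comm, hNN', smul_zero, smul_zero]
    have hE21 : E2 * E1 = 0 := by
      rw [hE1, hE2, smul_mul_assoc, mul_smul_comm, hN'N, smul_zero, smul_zero]
    have hE11 : E1 * E1 = E1 := by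
      rw [hE1, smul_mul_assoc, mul_smul_comm, hNN, smul_smul, smul_smul]
      congr 1
      field_simp
    have hE22 : E2 * E2 = E2 := by
      rw [hE2, smul_mul_assoc, mul_smul_comm, hN'N', smul_smul, smul_smul]
      congr 1
      field_simp
    have hcc' : c - c' = ((s : ZMod p) + t + 1 - α) * (v : ZMod p)⁻¹ := by
      rw [hcdef, hc'def]
      field_simp
      ring
    have hdiff : N - N' = ((s : ZMod p) + t + 1 - α) • (1 : Matrix (Fin v) (Fin v) (ZMod p))
        - (((s : ZMod p) + t + 1 - α) * (v : ZMod p)⁻¹) • J := by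
      rw [hNdef, hN'def]
      match_scalars
      · ring
      · ring
      · linear_combination -hcc'
    have h2 : ((s : ZMod p) + t + 1 - α)⁻¹ • (N - N')
        = 1 - (v : ZMod p)⁻¹ • J := by
      rw [hdiff, smul_sub, smul_smul, smul_smul, inv_mul_cancel₀ hDne, one_smul,
        show ((s : ZMod p) + t + 1 - α)⁻¹ * (((s : ZMod p) + t + 1 - α) * (v : ZMod p)⁻¹)
          = (v : ZMod p)⁻¹ by field_simp]
    have hsum : E0 + E1 + E2 = 1 := by
      have h3 : E0 + E1 + E2
          = (v : ZMod p)⁻¹ • J + ((s : ZMod p) + t + 1 - α)⁻¹ • (N - N') := by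
        rw [hE0, hE1, hE2, inv_neg, smul_sub]
        module
      rw [h3, h2]
      module
    have hDE1 : ((s : ZMod p) + t + 1 - α) • E1 = N := by
      rw [hE1, smul_smul, mul_inv_cancel₀ hDne, one_smul]
    have hcE0 : (((s : ZMod p) + 1) * ((t : ZMod p) + 1)) • E0 = c • J := by
      rw [hE0, smul_smul, hcdef]
      congr 1
      ring
    have hAdec : ((s : ZMod p) * ((t : ZMod p) + 1)) • E0 + ((s : ZMod p) - α) • E1
        + (-((t : ZMod p) + 1)) • E2 = A := by
      have h4 : ((s : ZMod p) * ((t : ZMod p) + 1)) • E0 + ((s : ZMod p) - α) • E1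
          + (-((t : ZMod p) + 1)) • E2
          = (-((t : ZMod p) + 1)) • (E0 + E1 + E2)
            + (((s : ZMod p) + 1) * ((t : ZMod p) + 1)) • E0
            + ((s : ZMod p) + t + 1 - α) • E1 := by
        module
      rw [h4, hsum, hDE1, hcE0, hNdef]
      module
    have hJdec : (v : ZMod p) • E0 = J := by
      rw [hE0, smul_smul, mul_inv_cancel₀ hVne, one_smul]
    have hE0mem : E0 ∈ 𝒜 := 𝒜.smul_mem hJmem _
    have hE1mem : E1 ∈ 𝒜 := by
      rw [hE1, hNdef]
      exact 𝒜.smul_mem (sub_mem (sub_mem hAmem (𝒜.smul_mem (one_mem 𝒜) _))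
        (𝒜.smul_mem hJmem _)) _
    have hE2mem : E2 ∈ 𝒜 := by
      rw [hE2, hN'def]
      exact 𝒜.smul_mem (sub_mem (sub_mem hAmem (𝒜.smul_mem (one_mem 𝒜) _))
        (𝒜.smul_mem hJmem _)) _
    have hE0ne : E0 ≠ 0 := by
      rw [hE0]; exact smul_ne_zero (inv_ne_zero hVne) hJne
    have hE1ne : E1 ≠ 0 := by
      rw [hE1, hNdef]; exact smul_ne_zero (inv_ne_zero hDne) (hNne _ _)
    have hE2ne : E2 ≠ 0 := by
      rw [hE2, hN'def]
      exact smul_ne_zero (inv_ne_zero (neg_ne_zero.2 hDne)) (hNne _ _)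
    let ε0 : 𝒜 := ⟨E0, hE0mem⟩
    let ε1 : 𝒜 := ⟨E1, hE1mem⟩
    let ε2 : 𝒜 := ⟨E2, hE2mem⟩
    let φ : ZMod p × ZMod p × ZMod p →+* 𝒜 :=
    { toFun := fun x => x.1 • ε0 + x.2.1 • ε1 + x.2.2 • ε2
      map_one' := by
        apply Subtype.ext
        show (1 : ZMod p) • E0 + (1 : ZMod p) • E1 + (1 : ZMod p) • E2
          = ((1 : 𝒜) : Matrix (Fin v) (Fin v) (ZMod p))
        simpa using hsum
      map_mul' := by
        intro x y
        apply Subtype.ext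
        show (x.1 * y.1) • E0 + (x.2.1 * y.2.1) • E1 + (x.2.2 * y.2.2) • E2
          = (x.1 • E0 + x.2.1 • E1 + x.2.2 • E2) * (y.1 • E0 + y.2.1 • E1 + y.2.2 • E2)
        simp only [add_mul, mul_add, smul_mul_assoc, mul_smul_comm,
          hE00, hE01, hE02, hE10, hE11, hE12, hE20, hE21, hE22,
          smul_zero, add_zero, zero_add, smul_smul]
        module
      map_zero' := by
        apply Subtype.ext
        show (0 : ZMod p) • E0 + (0 : ZMod p) • E1 + (0 : ZMod p) • E2
          = ((0 : 𝒜) : Matrix (Fin v) (Fin v) (ZMod p))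
        simp
      map_add' := by
        intro x y
        apply Subtype.ext
        show (x.1 + y.1) • E0 + (x.2.1 + y.2.1) • E1 + (x.2.2 + y.2.2) • E2 = _
        simp only [add_smul]
        show _ = (x.1 • E0 + x.2.1 • E1 + x.2.2 • E2) + (y.1 • E0 + y.2.1 • E1 + y.2.2 • E2)
        abel }
    have hφval : ∀ x : ZMod p × ZMod p × ZMod p,
        ((φ x : 𝒜) : Matrix (Fin v) (Fin v) (ZMod p))
          = x.1 • E0 + x.2.1 • E1 + x.2.2 • E2 := fun _ => rfl
    have hinj : Function.Injective φ := by
      rw [injective_iff_map_eq_zero]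
      intro x hx0
      have hval : x.1 • E0 + x.2.1 • E1 + x.2.2 • E2 = 0 := by
        rw [← hφval x, hx0]; rfl
      have h0 : x.1 • E0 = 0 := by
        have := congrArg (fun M => E0 * M) hval
        simpa [mul_add, mul_smul_comm, hE00, hE01, hE02] using this
      have ha : x.2.1 • E1 = 0 := by
        have := congrArg (fun M => E1 * M) hval
        simpa [mul_add, mul_smul_comm, hE10, hE11, hE12] using this
      have hb : x.2.2 • E2 = 0 := by
        have := congrArg (fun M => E2 * M) hval
        simpa [mul_add, mul_smul_comm, hE20, hE21, hE22] using this
      have hx1 : x.1 = 0 := by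
        rcases smul_eq_zero.mp h0 with h | h
        · exact h
        · exact absurd h hE0ne
      have hx2 : x.2.1 = 0 := by
        rcases smul_eq_zero.mp ha with h | h
        · exact h
        · exact absurd h hE1ne
      have hx3 : x.2.2 = 0 := by
        rcases smul_eq_zero.mp hb with h | h
        · exact h
        · exact absurd h hE2ne
      exact Prod.ext hx1 (Prod.ext hx2 hx3)
    have hsurj : Function.Surjective φ := by
      intro z
      have hz : (z : Matrix (Fin v) (Fin v) (ZMod p))
          ∈ Submodule.span (ZMod p) {(1 : Matrix (Fin v) (Fin v) (ZMod p)), A, J} :=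
        (hmem _).1 z.2
      have key : ∀ x, x ∈ Submodule.span (ZMod p)
          ({(1 : Matrix (Fin v) (Fin v) (ZMod p)), A, J} :
            Set (Matrix (Fin v) (Fin v) (ZMod p))) →
          ∃ w, ((φ w : 𝒜) : Matrix (Fin v) (Fin v) (ZMod p)) = x := by
        intro x hx
        induction hx using Submodule.span_induction with
        | mem u hu =>
          simp only [Set.mem_insert_iff, Set.mem_singleton_iff] at hu
          rcases hu with rfl | rfl | rfl
          · exact ⟨1, by rw [φ.map_one]; rfl⟩
          · refine ⟨((s : ZMod p) * ((t : ZMod p) + 1),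
              (s : ZMod p) - α, -((t : ZMod p) + 1)), ?_⟩
            rw [hφval]
            exact hAdec
          · refine ⟨((v : ZMod p), 0, 0), ?_⟩
            rw [hφval]
            simpa using hJdec
        | zero => exact ⟨0, by rw [φ.map_zero]; rfl⟩
        | add a b _ _ iha ihb =>
          obtain ⟨wa, hwa⟩ := iha
          obtain ⟨wb, hwb⟩ := ihb
          refine ⟨wa + wb, ?_⟩
          rw [φ.map_add]
          show ((φ wa : 𝒜) : Matrix (Fin v) (Fin v) (ZMod p))
            + ((φ wb : 𝒜) : Matrix (Fin v) (Fin v) (ZMod p)) = a + b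
          rw [hwa, hwb]
        | smul r a _ ih =>
          obtain ⟨w, hw⟩ := ih
          refine ⟨r • w, ?_⟩
          rw [hφval, ← hw, hφval]
          show (r • w.1) • E0 + (r • w.2.1) • E1 + (r • w.2.2) • E2
            = r • (w.1 • E0 + w.2.1 • E1 + w.2.2 • E2)
          simp only [smul_eq_mul]
          module
      obtain ⟨w, hw⟩ := key z.1 hz
      exact ⟨w, Subtype.ext hw⟩
    exact (RingEquiv.ofBijective φ ⟨hinj, hsurj⟩).isSemisimpleRing
end

section
/- Fix positive integers s, t, α with α ≤ min s t, and a positive integer v with α * v = (s+1) * (s*t + α). Set k = s*(t+1), λ = s − 1 + t*(α − 1), μ = α*(t+1). Let G be a simple graph on Fin v with G.IsSRGWith v k λ μ. Let p be a prime with p ∤ v and p ∤ (s + t + 1 − α). Let A := G.adjMatrix (ZMod p), J the all-ones matrix over ZMod p, and 𝒜 the (ZMod p)-subalgebra of Matrix (Fin v) (Fin v) (ZMod p) spanned by {1, A, J}. Then the Jacobson radical of 𝒜 is zero. -/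
open Matrix

/-!
Put `P = v • 1 - J`, so that `J * P = 0`. With `r = s - α` and `σ = -(t + 1)` the strongly regular
relation reads `A² = (r + σ) A - rσ 1 + μ J`, hence `(A - r)(A - σ) P = 0`. Thus `J`, `(A - σ) P`
and `(A - r) P` are eigenvectors for left multiplication by every `x = a 1 + b A + c J`, with
eigenvalues `a + b k + c v`, `a + b r` and `a + b σ`, and
`((r - σ) v) • 1 = (A - σ) P - (A - r) P + (r - σ) J`.
A nilpotent `x` annihilates its eigenvectors, hence annihilates `((r - σ) v) • 1`, which is a unit
because `p ∤ v` and `p ∤ s + t + 1 - α`. So `𝒜` is reduced, and the Jacobson radical of an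
Artinian ring is nilpotent.
-/

theorem IsArtinianRing.jacobson_bot_eq_bot_of_isReduced {R : Type*} [Ring R] [IsArtinianRing R]
    [IsReduced R] : (⊥ : Ideal R).jacobson = ⊥ := by
  obtain ⟨n, hn⟩ := IsArtinianRing.isNilpotent_jacobson_bot (R := R)
  refine eq_bot_iff.mpr fun x hx => ?_
  exact IsReduced.eq_zero x ⟨n, by simpa [hn] using Ideal.pow_mem_pow hx n⟩

theorem IsNilpotent.mul_eq_zero_of_mul_eq_smul {F R : Type*} [Field F] [Ring R] [Algebra F R]
    {x y : R} {c : F} (hx : IsNilpotent x) (h : x * y = c • y) : x * y = 0 := by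
  obtain ⟨n, hn⟩ := hx
  have hpow : ∀ k, x ^ k * y = c ^ k • y := by
    intro k
    induction k with
    | zero => simp
    | succ k ih => rw [_root_.pow_succ, mul_assoc, h, mul_smul_comm, ih, smul_smul, pow_succ']
  have : c ^ n • y = 0 := by rw [← hpow, hn, zero_mul]
  rcases smul_eq_zero.mp this with hc | hy
  · rw [h, eq_zero_of_pow_eq_zero hc, zero_smul]
  · rw [hy, mul_zero]

section QuadraticRelation

variable {F R : Type*} [Field F] [Ring R] [Algebra F R] {A J : R} {V K M : F}

theorem mul_sub_smul_one_mul_sub_eq_smul (hJJ : J * J = V • J) (hJA : J * A = K • J)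
    {ρ σ : F} (hAA : A * A = (ρ + σ) • A - (ρ * σ) • 1 + M • J) (a b c : F) :
    (a • 1 + b • A + c • J) * ((A - σ • 1) * (V • 1 - J)) =
      (a + b * ρ) • ((A - σ • 1) * (V • 1 - J)) := by
  have hJP : J * (V • 1 - J) = 0 := by rw [mul_sub, mul_smul_one, hJJ, sub_self]
  have hAy : A * ((A - σ • 1) * (V • 1 - J)) = ρ • ((A - σ • 1) * (V • 1 - J)) := by
    have hA : A * (A - σ • 1) = ρ • (A - σ • 1) + M • J := by
      rw [mul_sub, hAA, mul_smul_one]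
      module
    rw [← mul_assoc, hA, add_mul, smul_mul_assoc, smul_mul_assoc, hJP, smul_zero, add_zero]
  have hJy : J * ((A - σ • 1) * (V • 1 - J)) = 0 := by
    rw [← mul_assoc, mul_sub J A, hJA, mul_smul_one, ← sub_smul, smul_mul_assoc, hJP, smul_zero]
  rw [add_mul, add_mul, smul_mul_assoc, smul_mul_assoc, smul_mul_assoc, one_mul, hAy, hJy]
  module

theorem eq_zero_of_isNilpotent_of_mem_span {r s : F} (hV : V ≠ 0) (hrs : r ≠ s)
    (hJJ : J * J = V • J) (hAJ : A * J = K • J) (hJA : J * A = K • J)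
    (hAA : A * A = (r + s) • A - (r * s) • 1 + M • J)
    {x : R} (hx : x ∈ Submodule.span F {1, A, J}) (hnil : IsNilpotent x) : x = 0 := by
  rw [Submodule.mem_span_insert] at hx
  obtain ⟨a, z, hz, rfl⟩ := hx
  rw [Submodule.mem_span_insert] at hz
  obtain ⟨b, z, hz, rfl⟩ := hz
  obtain ⟨c, rfl⟩ := Submodule.mem_span_singleton.mp hz
  rw [← add_assoc] at hnil ⊢
  have hxJ : (a • 1 + b • A + c • J) * J = 0 := by
    refine hnil.mul_eq_zero_of_mul_eq_smul (c := a + b * K + c * V) ?_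
    rw [add_mul, add_mul, smul_mul_assoc, smul_mul_assoc, smul_mul_assoc, one_mul, hAJ, hJJ]
    module
  have hxr := hnil.mul_eq_zero_of_mul_eq_smul (mul_sub_smul_one_mul_sub_eq_smul hJJ hJA hAA a b c)
  rw [add_comm r s, mul_comm r s] at hAA
  have hxs := hnil.mul_eq_zero_of_mul_eq_smul (mul_sub_smul_one_mul_sub_eq_smul hJJ hJA hAA a b c)
  have hone : ((r - s) * V) • (1 : R) =
      (A - s • 1) * (V • 1 - J) - (A - r • 1) * (V • 1 - J) + (r - s) • J := by
    rw [← sub_mul, show A - s • 1 - (A - r • 1) = (r - s) • (1 : R) by module, smul_mul_assoc,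
      one_mul]
    module
  have hsmul : ((r - s) * V) • (a • 1 + b • A + c • J) = 0 := by
    rw [← mul_smul_one, hone, mul_add, mul_sub, hxr, hxs, mul_smul_comm, hxJ, sub_self, smul_zero,
      add_zero]
  exact (smul_eq_zero.mp hsmul).resolve_left (mul_ne_zero (sub_ne_zero.mpr hrs) hV)

end QuadraticRelation

theorem Matrix.of_one_mul_of_one {n α : Type*} [Fintype n] [Semiring α] :
    (of 1 : Matrix n n α) * of 1 = (Fintype.card n : α) • of 1 := by
  ext i j
  simp [mul_apply]

namespace SimpleGraph

variable {V α : Type*} [Fintype V] {G : SimpleGraph V} [DecidableRel G.Adj]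

theorem IsRegularOfDegree.adjMatrix_mul_of_one [Semiring α] {d : ℕ} (h : G.IsRegularOfDegree d) :
    G.adjMatrix α * of 1 = (d : α) • of 1 := by
  ext i j
  simp [card_neighborFinset_eq_degree, h i]

theorem IsRegularOfDegree.of_one_mul_adjMatrix [Semiring α] {d : ℕ} (h : G.IsRegularOfDegree d) :
    of 1 * G.adjMatrix α = (d : α) • of 1 := by
  ext i j
  simp [card_neighborFinset_eq_degree, h j]

theorem IsSRGWith.adjMatrix_mul_self [DecidableEq V] [CommRing α] {n k ℓ μ : ℕ}
    (h : G.IsSRGWith n k ℓ μ) :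
    G.adjMatrix α * G.adjMatrix α =
      ((ℓ : α) - μ) • G.adjMatrix α + ((k : α) - μ) • 1 + (μ : α) • of 1 := by
  classical
  have hcompl : Gᶜ.adjMatrix α = of 1 - 1 - G.adjMatrix α := by
    rw [← G.compl_adjMatrix_eq_adjMatrix_compl α,
      ← G.one_add_adjMatrix_add_compl_adjMatrix_eq_of_one α]
    abel
  rw [← sq, h.matrix_eq, hcompl]
  simp only [← Nat.cast_smul_eq_nsmul α]
  module

end SimpleGraph

theorem stmt_7_general (s t α v : ℕ) (hs : 0 < s) (hα : 0 < α)
    (hmin : α ≤ min s t)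
    (G : SimpleGraph (Fin v)) [DecidableRel G.Adj]
    (hG : G.IsSRGWith v (s * (t + 1)) (s - 1 + t * (α - 1)) (α * (t + 1)))
    (p : ℕ) [Fact p.Prime]
    (hpv : ¬ p ∣ v) (hpr : ¬ p ∣ (s + t + 1 - α))
    (𝒜 : Subalgebra (ZMod p) (Matrix (Fin v) (Fin v) (ZMod p)))
    (h𝒜 : Subalgebra.toSubmodule 𝒜 =
      Submodule.span (ZMod p)
        {(1 : Matrix (Fin v) (Fin v) (ZMod p)), G.adjMatrix (ZMod p),
          Matrix.of fun _ _ => (1 : ZMod p)}) :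
    Ideal.jacobson (⊥ : Ideal 𝒜) = ⊥ := by
  have hv : (v : ZMod p) ≠ 0 := by rwa [Ne, ZMod.natCast_eq_zero_iff]
  have hrs : (s - α : ZMod p) ≠ -(t + 1) := by
    have : (s - α - -(t + 1) : ZMod p) = ((s + t + 1 - α : ℕ) : ZMod p) := by
      rw [Nat.cast_sub (by omega)]
      push_cast
      ring
    rwa [Ne, ← sub_eq_zero, this, ZMod.natCast_eq_zero_iff]
  have hJJ : (of 1 : Matrix (Fin v) (Fin v) (ZMod p)) * of 1 = (v : ZMod p) • of 1 := by
    rw [Matrix.of_one_mul_of_one, Fintype.card_fin]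
  have hAA : G.adjMatrix (ZMod p) * G.adjMatrix (ZMod p) =
      ((s - α : ZMod p) + -(t + 1)) • G.adjMatrix (ZMod p) - ((s - α : ZMod p) * -(t + 1)) • 1 +
        ((α * (t + 1) : ℕ) : ZMod p) • of 1 := by
    rw [hG.adjMatrix_mul_self]
    push_cast [Nat.cast_sub hs, Nat.cast_sub hα]
    module
  have : IsReduced 𝒜 := ⟨fun x hx => Subtype.ext <|
    eq_zero_of_isNilpotent_of_mem_span hv hrs hJJ hG.regular.adjMatrix_mul_of_one
      hG.regular.of_one_mul_adjMatrix hAA (h𝒜 ▸ x.2) (hx.map 𝒜.val)⟩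
  exact IsArtinianRing.jacobson_bot_eq_bot_of_isReduced

/-- Case (SS) of Theorem 3.1: if `p ∤ v` and `p ∤ (s+t+1−α)`, the Jacobson
radical of the modular adjacency algebra of the point scheme vanishes. -/
theorem stmt_7 (s t α v : ℕ) (hs : 0 < s) (ht : 0 < t) (hα : 0 < α)
    (hmin : α ≤ min s t) (hv : 0 < v)
    (hveq : α * v = (s + 1) * (s * t + α))
    (G : SimpleGraph (Fin v)) [DecidableRel G.Adj]
    (hG : G.IsSRGWith v (s * (t + 1)) (s - 1 + t * (α - 1)) (α * (t + 1)))
    (p : ℕ) (hp : p.Prime) [Fact p.Prime]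
    (hpv : ¬ p ∣ v) (hpr : ¬ p ∣ (s + t + 1 - α))
    (𝒜 : Subalgebra (ZMod p) (Matrix (Fin v) (Fin v) (ZMod p)))
    (h𝒜 : Subalgebra.toSubmodule 𝒜 =
      Submodule.span (ZMod p)
        {(1 : Matrix (Fin v) (Fin v) (ZMod p)), G.adjMatrix (ZMod p),
          Matrix.of fun _ _ => (1 : ZMod p)}) :
    Ideal.jacobson (⊥ : Ideal 𝒜) = ⊥ :=
  stmt_7_general s t α v hs hα hmin G hG p hpv hpr 𝒜 h𝒜
end

section
/- Fix positive integers s, t, α with α ≤ min s t, and a positive integer v with α * v = (s+1) * (s*t + α). Set k = s*(t+1), λ = s − 1 + t*(α − 1), μ = α*(t+1). Let G be a simple graph on Fin v with G.IsSRGWith v k λ μ. Let p be a prime with p ∣ v and p ∤ (s + t + 1 − α). Let A := G.adjMatrix (ZMod p), J the all-ones matrix over ZMod p, and 𝒜 the (ZMod p)-subalgebra of Matrix (Fin v) (Fin v) (ZMod p) spanned by {1, A, J}. Then the Jacobson radical of 𝒜 equals the (ZMod p)-span of J (viewed inside 𝒜); in particular it is one-dimensional over ZMod p and J² = 0 in 𝒜.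 -/
/-!
Modulo the ideal `F ∙ J` the algebra is `F[A]` with `(A - θ)(A - τ) ≡ 0`, where `θ = s - α` and
`τ = -(t + 1)` are the restricted eigenvalues: `A (A - τ) = θ (A - τ) + μ J`. Since `p ∣ v`,
`J² = v J = 0`, so `F ∙ J` is a square-zero ideal and lies in the radical. Conversely, if
`x = a + b A + c J` is in the radical, then `β - x` is invertible for every `β ≠ 0`; as it maps the
"eigenvector modulo `J`" `A - τ` into `F ∙ J` for `β = a + b θ`, this forces `a + b θ = 0`, and
likewise `a + b τ = 0`. As `θ - τ = s + t + 1 - α` is a unit mod `p`, `a = b = 0`.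
-/

open Matrix Submodule

section Jacobson

variable {F R : Type*} [Field F] [Ring R] [Algebra F R]

theorem mem_span_singleton_of_mul_eq_one {W U B J : R} (hWU : W * U = 1)
    (hB : U * B ∈ F ∙ J) (hJ : U * J ∈ F ∙ J) : B ∈ F ∙ J := by
  obtain ⟨d, hd⟩ := mem_span_singleton.mp hB
  obtain ⟨e, he⟩ := mem_span_singleton.mp hJ
  have hW : ∀ M, W * (U * M) = M := fun M => by rw [← mul_assoc, hWU, one_mul]
  have hWJ : e • (W * J) = J := by rw [← mul_smul_comm, he, hW]
  have hWB : d • (W * J) = B := by rw [← mul_smul_comm, hd, hW]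
  rcases eq_or_ne e 0 with rfl | he0
  · have hJ0 : J = 0 := by rw [← hWJ, zero_smul]
    rw [← hWB, hJ0, mul_zero, smul_zero]
    exact zero_mem _
  · rw [← hWB, (eq_inv_smul_iff₀ he0).mpr hWJ]
    exact smul_mem _ _ (smul_mem _ _ (mem_span_singleton_self J))

theorem exists_mul_smul_one_sub_eq_one_of_mem_jacobson {x : R}
    (hx : x ∈ Ideal.jacobson (⊥ : Ideal R)) {c : F} (hc : c ≠ 0) :
    ∃ w : R, w * (c • 1 - x) = 1 := by
  obtain ⟨z, hz⟩ := Ideal.mem_jacobson_iff.mp hx ((-c⁻¹) • 1)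
  refine ⟨c⁻¹ • z, ?_⟩
  rw [Ideal.mem_bot, sub_eq_zero] at hz
  calc c⁻¹ • z * (c • 1 - x) = z * ((-c⁻¹) • 1) * x + z := by
        simp only [mul_sub, smul_mul_assoc, mul_smul_comm, mul_one, smul_smul,
          mul_inv_cancel₀ hc, one_smul, neg_smul, neg_mul, mul_neg]
        abel
    _ = 1 := hz

theorem eq_zero_of_mem_jacobson_of_mul_sub_smul_mem {𝒜 : Subalgebra F R} {x : 𝒜}
    (hx : x ∈ Ideal.jacobson (⊥ : Ideal 𝒜)) {B J : R} {β : F}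
    (hB : (x : R) * B - β • B ∈ F ∙ J) (hJ : (x : R) * J ∈ F ∙ J) (hBJ : B ∉ F ∙ J) :
    β = 0 := by
  by_contra hβ
  obtain ⟨w, hw⟩ := exists_mul_smul_one_sub_eq_one_of_mem_jacobson hx hβ
  refine hBJ (mem_span_singleton_of_mul_eq_one (W := (w : R)) (U := β • 1 - x)
    (by simpa using congrArg Subtype.val hw) ?_ ?_)
  · rw [sub_mul, smul_mul_assoc, one_mul, ← neg_sub]
    exact neg_mem hB
  · rw [sub_mul, smul_mul_assoc, one_mul]
    exact sub_mem (smul_mem _ _ (mem_span_singleton_self J)) hJ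

theorem mem_jacobson_bot_of_forall_isNilpotent_mul {S : Type*} [Ring S] {x : S}
    (h : ∀ y, IsNilpotent (y * x)) : x ∈ Ideal.jacobson (⊥ : Ideal S) := by
  refine Ideal.mem_jacobson_iff.mpr fun y => ?_
  obtain ⟨u, hu⟩ := (h y).isUnit_add_one
  refine ⟨↑u⁻¹, ?_⟩
  rw [Ideal.mem_bot, mul_assoc, ← mul_add_one, ← hu, Units.inv_mul, sub_self]

theorem finrank_restrictScalars_eq_one_of_forall_mem_iff {𝒜 : Subalgebra F R} {I : Ideal 𝒜}
    {J : R} (hJ𝒜 : J ∈ 𝒜) (hJ : J ≠ 0) (hI : ∀ x : 𝒜, x ∈ I ↔ (x : R) ∈ F ∙ J) :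
    Module.finrank F (I.restrictScalars F) = 1 := by
  have hspan : I.restrictScalars F = F ∙ (⟨J, hJ𝒜⟩ : 𝒜) := by
    ext x
    simp only [restrictScalars_mem, hI, mem_span_singleton, Subtype.ext_iff,
      Subalgebra.coe_smul]
  rw [hspan]
  exact finrank_span_singleton (by simpa [Subtype.ext_iff] using hJ)

end Jacobson

namespace Matrix

theorem of_one_ne_zero {V F : Type*} [Nonempty V] [MulZeroOneClass F] [Nontrivial F] :
    (of fun _ _ => 1 : Matrix V V F) ≠ 0 :=
  fun h => one_ne_zero (congrFun (congrFun h (Classical.arbitrary V)) (Classical.arbitrary V))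

theorem of_one_mul_of_one_s8 {V F : Type*} [Fintype V] [NonAssocSemiring F] :
    (of fun _ _ => 1 : Matrix V V F) * of (fun _ _ => 1) =
      (Fintype.card V : F) • of fun _ _ => 1 := by
  ext i j
  simp [mul_apply]

end Matrix

namespace SimpleGraph

section

variable {V F : Type*} {G : SimpleGraph V} [DecidableRel G.Adj]

theorem adjMatrix_compl [DecidableEq V] [AddGroupWithOne F] :
    Gᶜ.adjMatrix F = of (fun _ _ => 1) - 1 - G.adjMatrix F := by
  ext i j
  by_cases h : i = j
  · simp [h]
  · by_cases h2 : G.Adj i j <;> simp [h, h2, one_apply]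

theorem adjMatrix_sub_smul_one_notMem_span [DecidableEq V] [Ring F] [Nontrivial F] {i j j' : V}
    (hij : G.Adj i j) (hij' : i ≠ j') (hnadj : ¬G.Adj i j') (c : F) :
    G.adjMatrix F - c • 1 ∉ F ∙ (of fun _ _ => 1 : Matrix V V F) := by
  rw [mem_span_singleton]
  rintro ⟨d, hd⟩
  have hj := congrFun (congrFun hd i) j
  have hj' := congrFun (congrFun hd i) j'
  simp [hij, hnadj, hij', G.ne_of_adj hij] at hj hj'
  exact one_ne_zero (hj.symm.trans hj')

variable [Fintype V]

theorem IsRegularOfDegree.exists_adj_and_not_adj {k : ℕ} (h : G.IsRegularOfDegree k) (hk : 0 < k)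
    (hkV : k + 1 < Fintype.card V) : ∃ i j j', G.Adj i j ∧ i ≠ j' ∧ ¬G.Adj i j' := by
  classical
  obtain ⟨i⟩ : Nonempty V := Fintype.card_pos_iff.mp (by omega)
  obtain ⟨j, hij⟩ := (G.degree_pos_iff_exists_adj i).mp (h i ▸ hk)
  have hcard : (insert i (G.neighborFinset i)).card < (Finset.univ : Finset V).card :=
    (Finset.card_insert_le _ _).trans_lt (by rwa [card_neighborFinset_eq_degree, h i])
  obtain ⟨j', -, hj'⟩ := Finset.exists_mem_notMem_of_card_lt_card hcard
  simp only [Finset.mem_insert, mem_neighborFinset, not_or] at hj'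
  exact ⟨i, j, j', hij, Ne.symm hj'.1, hj'.2⟩

variable [CommRing F]

theorem IsRegularOfDegree.adjMatrix_mul_of_one_s8 {k : ℕ} (h : G.IsRegularOfDegree k) :
    G.adjMatrix F * of (fun _ _ => 1) = (k : F) • of fun _ _ => 1 := by
  ext i j
  simp [adjMatrix_mul_apply, h i]

theorem IsRegularOfDegree.of_one_mul_adjMatrix_s8 {k : ℕ} (h : G.IsRegularOfDegree k) :
    of (fun _ _ => 1) * G.adjMatrix F = (k : F) • of fun _ _ => 1 := by
  ext i j
  simp [mul_adjMatrix_apply, h j]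

variable [DecidableEq V]

theorem IsSRGWith.adjMatrix_mul_self_s8 {n k l m : ℕ} (h : G.IsSRGWith n k l m) :
    G.adjMatrix F * G.adjMatrix F = (k : F) • 1 + (l : F) • G.adjMatrix F
      + (m : F) • (of (fun _ _ => 1) - 1 - G.adjMatrix F) := by
  rw [← sq, h.matrix_eq, adjMatrix_compl]
  simp only [Nat.cast_smul_eq_nsmul]

theorem IsSRGWith.adjMatrix_mul_sub_smul_one {n k l m : ℕ} (h : G.IsSRGWith n k l m) {θ τ : F}
    (hsum : θ + τ = l - m) (hprod : θ * τ = m - k) :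
    G.adjMatrix F * (G.adjMatrix F - τ • 1) =
      θ • (G.adjMatrix F - τ • 1) + (m : F) • of fun _ _ => 1 := by
  rw [mul_sub, mul_smul_comm, mul_one, h.adjMatrix_mul_self_s8]
  match_scalars
  · linear_combination hprod
  · linear_combination -hsum
  · ring

end

variable {V F : Type*} [Fintype V] [DecidableEq V] [Field F] {G : SimpleGraph V}
  [DecidableRel G.Adj] {𝒜 : Subalgebra F (Matrix V V F)}

theorem IsRegularOfDegree.mul_of_one_mem_span {k : ℕ} (h : G.IsRegularOfDegree k)
    (h𝒜 : Subalgebra.toSubmodule 𝒜 = span F {1, G.adjMatrix F, of fun _ _ => 1}) (y : 𝒜) :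
    (y : Matrix V V F) * of (fun _ _ => 1) ∈ F ∙ (of fun _ _ => 1 : Matrix V V F) := by
  obtain ⟨a, b, c, hy⟩ := mem_span_triple.mp (h𝒜 ▸ (Subalgebra.mem_toSubmodule 𝒜).mpr y.2)
  refine mem_span_singleton.mpr ⟨a + b * k + c * Fintype.card V, ?_⟩
  rw [← hy, add_mul, add_mul, smul_mul_assoc, smul_mul_assoc, smul_mul_assoc, one_mul,
    h.adjMatrix_mul_of_one_s8, of_one_mul_of_one_s8]
  match_scalars; ring

theorem IsSRGWith.coe_mem_span_of_mem_jacobson {n k l m : ℕ} (h : G.IsSRGWith n k l m)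
    {θ τ : F} (hsum : θ + τ = l - m) (hprod : θ * τ = m - k) (hθτ : θ ≠ τ)
    (hA : ∀ c : F, G.adjMatrix F - c • 1 ∉ F ∙ (of fun _ _ => 1 : Matrix V V F))
    (h𝒜 : Subalgebra.toSubmodule 𝒜 = span F {1, G.adjMatrix F, of fun _ _ => 1}) {x : 𝒜}
    (hx : x ∈ Ideal.jacobson (⊥ : Ideal 𝒜)) :
    (x : Matrix V V F) ∈ F ∙ (of fun _ _ => 1 : Matrix V V F) := by
  obtain ⟨a, b, c, hx'⟩ := mem_span_triple.mp (h𝒜 ▸ (Subalgebra.mem_toSubmodule 𝒜).mpr x.2)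
  have hJ (d : F) : d • (of fun _ _ => 1 : Matrix V V F) ∈ F ∙ (of fun _ _ => 1) :=
    smul_mem _ d (mem_span_singleton_self _)
  have key (θ' τ' : F) (hsum' : θ' + τ' = l - m) (hprod' : θ' * τ' = m - k) :
      a + b * θ' = 0 := by
    refine eq_zero_of_mem_jacobson_of_mul_sub_smul_mem hx ?_
      (h.regular.mul_of_one_mem_span h𝒜 x) (hA τ')
    convert hJ (b * m + c * (k - τ')) using 1
    rw [← hx', add_mul, add_mul, smul_mul_assoc, smul_mul_assoc, smul_mul_assoc, one_mul,
      h.adjMatrix_mul_sub_smul_one hsum' hprod', mul_sub, mul_smul_comm, mul_one,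
      h.regular.of_one_mul_adjMatrix_s8]
    match_scalars <;> ring
  have h₁ := key θ τ hsum hprod
  have h₂ := key τ θ (by rwa [add_comm]) (by rwa [mul_comm])
  have hb : b = 0 := by
    refine (mul_eq_zero.mp ?_).resolve_right (sub_ne_zero.mpr hθτ)
    linear_combination h₁ - h₂
  obtain rfl : a = 0 := by simpa [hb] using h₁
  rw [← hx', hb]
  simpa using hJ c

theorem IsRegularOfDegree.mem_jacobson_of_coe_mem_span {k : ℕ} (h : G.IsRegularOfDegree k)
    (hcard : (Fintype.card V : F) = 0)
    (h𝒜 : Subalgebra.toSubmodule 𝒜 = span F {1, G.adjMatrix F, of fun _ _ => 1}) {x : 𝒜}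
    (hx : (x : Matrix V V F) ∈ F ∙ (of fun _ _ => 1 : Matrix V V F)) :
    x ∈ Ideal.jacobson (⊥ : Ideal 𝒜) := by
  refine mem_jacobson_bot_of_forall_isNilpotent_mul fun y => ⟨2, Subtype.ext ?_⟩
  obtain ⟨c, hc⟩ := mem_span_singleton.mp hx
  obtain ⟨e, he⟩ := mem_span_singleton.mp (h.mul_of_one_mem_span h𝒜 y)
  have hyx : ((y * x : 𝒜) : Matrix V V F) = (c * e) • of fun _ _ => 1 := by
    rw [Subalgebra.coe_mul, ← hc, mul_smul_comm, ← he, smul_smul]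
  rw [Subalgebra.coe_pow, hyx, sq, smul_mul_smul_comm, of_one_mul_of_one_s8, hcard, zero_smul,
    smul_zero, Subalgebra.coe_zero]

theorem IsSRGWith.mem_jacobson_bot_iff {n k l m : ℕ} (h : G.IsSRGWith n k l m) (hk : 0 < k)
    (hkn : k + 1 < n) {θ τ : F} (hsum : θ + τ = l - m) (hprod : θ * τ = m - k) (hθτ : θ ≠ τ)
    (hcard : (n : F) = 0)
    (h𝒜 : Subalgebra.toSubmodule 𝒜 = span F {1, G.adjMatrix F, of fun _ _ => 1}) (x : 𝒜) :
    x ∈ Ideal.jacobson (⊥ : Ideal 𝒜) ↔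
      (x : Matrix V V F) ∈ F ∙ (of fun _ _ => 1 : Matrix V V F) := by
  obtain ⟨i, j, j', hij, hij', hnadj⟩ := h.regular.exists_adj_and_not_adj hk (h.card ▸ hkn)
  exact ⟨h.coe_mem_span_of_mem_jacobson hsum hprod hθτ
    (adjMatrix_sub_smul_one_notMem_span hij hij' hnadj) h𝒜,
    h.regular.mem_jacobson_of_coe_mem_span (h.card ▸ hcard) h𝒜⟩

end SimpleGraph

theorem partialGeometry_degree_add_one_lt {s t α v : ℕ} (hs : 0 < s) (ht : 0 < t) (hαs : α ≤ s)
    (hveq : α * v = (s + 1) * (s * t + α)) : s * (t + 1) + 1 < v := by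
  refine Nat.lt_of_mul_lt_mul_left (a := α) ?_
  rw [hveq]
  nlinarith [Nat.mul_le_mul_right (s * t) hαs, Nat.mul_pos hs ht]

theorem stmt_8_general (s t α v : ℕ) (hs : 0 < s) (ht : 0 < t) (hα : 0 < α)
    (hmin : α ≤ min s t)
    (hveq : α * v = (s + 1) * (s * t + α))
    (G : SimpleGraph (Fin v)) [DecidableRel G.Adj]
    (hG : G.IsSRGWith v (s * (t + 1)) (s - 1 + t * (α - 1)) (α * (t + 1)))
    (p : ℕ) [Fact p.Prime]
    (hpv : p ∣ v) (hpr : ¬ p ∣ (s + t + 1 - α))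
    (𝒜 : Subalgebra (ZMod p) (Matrix (Fin v) (Fin v) (ZMod p)))
    (h𝒜 : Subalgebra.toSubmodule 𝒜 =
      Submodule.span (ZMod p)
        {(1 : Matrix (Fin v) (Fin v) (ZMod p)), G.adjMatrix (ZMod p),
          Matrix.of fun _ _ => (1 : ZMod p)}) :
    (∀ x : 𝒜, x ∈ Ideal.jacobson (⊥ : Ideal 𝒜) ↔
      (x : Matrix (Fin v) (Fin v) (ZMod p)) ∈
        Submodule.span (ZMod p) {Matrix.of fun _ _ => (1 : ZMod p)}) ∧
    Module.finrank (ZMod p)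
      (Submodule.restrictScalars (ZMod p) (Ideal.jacobson (⊥ : Ideal 𝒜))) = 1 ∧
    (Matrix.of fun _ _ => (1 : ZMod p)) * (Matrix.of fun _ _ => (1 : ZMod p)) =
      (0 : Matrix (Fin v) (Fin v) (ZMod p)) := by
  have hαs : α ≤ s := hmin.trans (min_le_left s t)
  have hkv := partialGeometry_degree_add_one_lt hs ht hαs hveq
  have hv : (v : ZMod p) = 0 := (ZMod.natCast_eq_zero_iff v p).mpr hpv
  have hsum : ((s : ZMod p) - α) + -(t + 1) =
      ((s - 1 + t * (α - 1) : ℕ) : ZMod p) - (α * (t + 1) : ℕ) := by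
    push_cast [Nat.cast_sub (show 1 ≤ s from hs), Nat.cast_sub (show 1 ≤ α from hα)]
    ring
  have hprod : ((s : ZMod p) - α) * -(t + 1) =
      ((α * (t + 1) : ℕ) : ZMod p) - (s * (t + 1) : ℕ) := by
    push_cast
    ring
  have hθτ : (s : ZMod p) - α ≠ -(t + 1) := by
    intro h
    apply hpr
    rw [← ZMod.natCast_eq_zero_iff, Nat.cast_sub (by omega)]
    push_cast
    linear_combination h
  have hrad := hG.mem_jacobson_bot_iff (by positivity) hkv hsum hprod hθτ hv h𝒜
  have : Nonempty (Fin v) := ⟨⟨0, by omega⟩⟩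
  refine ⟨hrad, finrank_restrictScalars_eq_one_of_forall_mem_iff ?_ of_one_ne_zero hrad, ?_⟩
  · exact (Subalgebra.mem_toSubmodule 𝒜).mp (h𝒜 ▸ subset_span (by simp))
  · rw [of_one_mul_of_one_s8, Fintype.card_fin, hv, zero_smul]

/-- Case (V) of Theorem 3.1: if `p ∣ v` and `p ∤ (s+t+1−α)`, the Jacobson
radical of the modular adjacency algebra of the point scheme is the
one-dimensional span of the all-ones matrix `J`, and `J² = 0`. -/
theorem stmt_8 (s t α v : ℕ) (hs : 0 < s) (ht : 0 < t) (hα : 0 < α)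
    (hmin : α ≤ min s t) (hv : 0 < v)
    (hveq : α * v = (s + 1) * (s * t + α))
    (G : SimpleGraph (Fin v)) [DecidableRel G.Adj]
    (hG : G.IsSRGWith v (s * (t + 1)) (s - 1 + t * (α - 1)) (α * (t + 1)))
    (p : ℕ) (hp : p.Prime) [Fact p.Prime]
    (hpv : p ∣ v) (hpr : ¬ p ∣ (s + t + 1 - α))
    (𝒜 : Subalgebra (ZMod p) (Matrix (Fin v) (Fin v) (ZMod p)))
    (h𝒜 : Subalgebra.toSubmodule 𝒜 =
      Submodule.span (ZMod p)
        {(1 : Matrix (Fin v) (Fin v) (ZMod p)), G.adjMatrix (ZMod p),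
          Matrix.of fun _ _ => (1 : ZMod p)}) :
    (∀ x : 𝒜, x ∈ Ideal.jacobson (⊥ : Ideal 𝒜) ↔
      (x : Matrix (Fin v) (Fin v) (ZMod p)) ∈
        Submodule.span (ZMod p) {Matrix.of fun _ _ => (1 : ZMod p)}) ∧
    Module.finrank (ZMod p)
      (Submodule.restrictScalars (ZMod p) (Ideal.jacobson (⊥ : Ideal 𝒜))) = 1 ∧
    (Matrix.of fun _ _ => (1 : ZMod p)) * (Matrix.of fun _ _ => (1 : ZMod p)) =
      (0 : Matrix (Fin v) (Fin v) (ZMod p)) :=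
  stmt_8_general s t α v hs ht hα hmin hveq G hG p hpv hpr 𝒜 h𝒜
end

section
/- Fix positive integers s, t, α with α ≤ min s t, and a positive integer v with α * v = (s+1) * (s*t + α). Set k = s*(t+1), λ = s − 1 + t*(α − 1), μ = α*(t+1). Let G be a simple graph on Fin v with G.IsSRGWith v k λ μ. Let p be a prime such that p does not divide (s*t+α)*(s+1)*(t+1)*(s+t+1−α), p ∤ s*(t+1), p ∤ (s − α), and p ∤ (t+1). Then the adjacency matrix G.adjMatrix (ZMod p) has rank v; equivalently, it is invertible over ZMod p. -/
open Matrix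

private lemma compl_adjMatrix_eq {n : ℕ} (G : SimpleGraph (Fin n)) [DecidableRel G.Adj]
    (R : Type*) [CommRing R] :
    Gᶜ.adjMatrix R = (Matrix.of fun _ _ => (1 : R)) - 1 - G.adjMatrix R := by
  classical
  ext i j
  simp only [SimpleGraph.adjMatrix_apply, SimpleGraph.compl_adj, Matrix.sub_apply,
    Matrix.of_apply, Matrix.one_apply]
  by_cases hij : i = j
  · subst hij; simp
  · by_cases h : G.Adj i j <;> simp [hij, h]

private lemma adjMatrix_mul_allOnes {n k : ℕ} (G : SimpleGraph (Fin n)) [DecidableRel G.Adj]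
    (R : Type*) [CommRing R] (hreg : G.IsRegularOfDegree k) :
    G.adjMatrix R * (Matrix.of fun _ _ => (1 : R)) = (k : R) • Matrix.of fun _ _ => (1 : R) := by
  ext i j
  simp [hreg i]

/-- Proposition 4.2: generic `p`-ranks for partial geometries. Outside the
exceptional primes, the adjacency matrix of the point graph of
`pg(s,t,α)` has full rank `v` over `ZMod p`; equivalently it is invertible. -/
theorem stmt_13 (s t α v : ℕ) (hs : 0 < s) (ht : 0 < t) (hα : 0 < α)
    (hmin : α ≤ min s t) (hv : 0 < v)
    (hveq : α * v = (s + 1) * (s * t + α))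
    (G : SimpleGraph (Fin v)) [DecidableRel G.Adj]
    (hG : G.IsSRGWith v (s * (t + 1)) (s - 1 + t * (α - 1)) (α * (t + 1)))
    (p : ℕ) (hp : p.Prime) [Fact p.Prime]
    (h1 : ¬ p ∣ (s * t + α) * (s + 1) * (t + 1) * (s + t + 1 - α))
    (h2 : ¬ p ∣ s * (t + 1)) (h3 : ¬ p ∣ (s - α)) (h4 : ¬ p ∣ (t + 1)) :
    (G.adjMatrix (ZMod p)).rank = v ∧ IsUnit (G.adjMatrix (ZMod p)) := by
  classical
  set R := ZMod p
  set A : Matrix (Fin v) (Fin v) R := G.adjMatrix R with hA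
  set J : Matrix (Fin v) (Fin v) R := Matrix.of fun _ _ => (1 : R) with hJ
  set k : ℕ := s * (t + 1)
  set l : ℕ := s - 1 + t * (α - 1)
  set μ : ℕ := α * (t + 1)
  -- cast facts
  have hkne : (k : R) ≠ 0 := fun h => h2 ((ZMod.natCast_eq_zero_iff _ _).mp h)
  have hμk : μ ≤ k := Nat.mul_le_mul_right _ (le_trans hmin (min_le_left _ _))
  have hkmμ : k - μ = (s - α) * (t + 1) := by
    simp only [k, μ, Nat.sub_mul]
  have hcne : (k : R) - (μ : R) ≠ 0 := by
    rw [← Nat.cast_sub hμk, hkmμ]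
    intro h
    rcases (Nat.Prime.dvd_mul hp).mp ((ZMod.natCast_eq_zero_iff _ _).mp h) with h | h
    · exact h3 h
    · exact h4 h
  -- matrix identities
  have hsq : A ^ 2 = (k : R) • 1 + (l : R) • A + (μ : R) • (J - 1 - A) := by
    have := hG.matrix_eq (α := R)
    rw [compl_adjMatrix_eq G R] at this
    simpa [hA, hJ, Nat.cast_smul_eq_nsmul R] using this
  have hAJ : A * J = (k : R) • J := adjMatrix_mul_allOnes G R hG.regular
  -- explicit inverse
  set c : R := (k : R) - (μ : R) with hc
  set B : Matrix (Fin v) (Fin v) R :=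
    ((μ : R) - (l : R)) • 1 + A - ((μ : R) * (k : R)⁻¹) • J with hB
  have hmain : A * B = c • 1 := by
    have hABexp : A * B = ((μ : R) - (l : R)) • A + A ^ 2 - ((μ : R) * (k : R)⁻¹) • (A * J) := by
      rw [hB]
      simp only [Matrix.mul_sub, Matrix.mul_add, Matrix.mul_smul, Matrix.mul_one, sq]
    rw [hABexp, hAJ, hsq, smul_smul, mul_assoc, inv_mul_cancel₀ hkne, mul_one, hc]
    module
  have hABone : A * ((c⁻¹ : R) • B) = 1 := by
    rw [Matrix.mul_smul, hmain, smul_smul, inv_mul_cancel₀ hcne, one_smul]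
  have hunit : IsUnit A :=
    @isUnit_of_invertible _ _ A (invertibleOfRightInverse A _ hABone)
  refine ⟨?_, hunit⟩
  rw [Matrix.rank_of_isUnit _ hunit, Fintype.card_fin]
end

section
/- Let G be a simple graph on Fin 15 with G.IsSRGWith 15 6 1 3, and let A := G.adjMatrix (ZMod 2). Then A.rank = 14, and the kernel of the linear map (ZMod 2)^15 → (ZMod 2)^15 given by A is exactly the one-dimensional span of the all-ones vector. -/
open Matrix

/-- Proposition 6.4: the 2-rank of the point graph of `GQ(2,2)` is 14, and
the kernel of its adjacency matrix over `ZMod 2` is spanned by the all-ones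
vector. -/
theorem stmt_17 (G : SimpleGraph (Fin 15)) [DecidableRel G.Adj]
    (hG : G.IsSRGWith 15 6 1 3) :
    (G.adjMatrix (ZMod 2)).rank = 14 ∧
    LinearMap.ker (Matrix.mulVecLin (G.adjMatrix (ZMod 2))) =
      Submodule.span (ZMod 2) {(fun _ => 1 : Fin 15 → ZMod 2)} := by
  set A := G.adjMatrix (ZMod 2) with hA
  -- all-ones is in the kernel
  have hone : A.mulVec (fun _ => 1) = 0 := by
    funext v
    simp only [hA, SimpleGraph.adjMatrix_mulVec_apply]
    have hd := hG.regular v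
    simp only [SimpleGraph.degree] at hd
    rw [Finset.sum_const, hd, Pi.zero_apply]
    decide
  -- A^2 = J + I over ZMod 2
  have hsq : A * A = Matrix.of (fun _ _ => (1 : ZMod 2)) + 1 := by
    have := hG.matrix_eq (α := ZMod 2)
    rw [sq] at this
    rw [hA, this]
    ext v w
    simp only [Matrix.add_apply, Matrix.smul_apply, Matrix.of_apply,
      SimpleGraph.adjMatrix_apply, SimpleGraph.compl_adj, Matrix.one_apply]
    by_cases hvw : v = w
    · subst hvw; simp [G.irrefl]; decide
    · by_cases ha : G.Adj v w <;> simp [hvw, ha, Ne.symm hvw] <;> decide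
  have hker : LinearMap.ker (Matrix.mulVecLin A) =
      Submodule.span (ZMod 2) {(fun _ => 1 : Fin 15 → ZMod 2)} := by
    apply le_antisymm
    · intro x hx
      have hx0 : A.mulVec x = 0 := hx
      have h2 : (A * A).mulVec x = 0 := by
        rw [← Matrix.mulVec_mulVec, hx0, Matrix.mulVec_zero]
      rw [hsq, Matrix.add_mulVec, Matrix.one_mulVec] at h2
      have hxeq : x = (∑ i, x i) • (fun _ => 1 : Fin 15 → ZMod 2) := by
        have hx2 : x = -(Matrix.of (fun _ _ => (1 : ZMod 2))).mulVec x := by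
          rw [eq_neg_iff_add_eq_zero, add_comm]; exact h2
        funext v
        calc x v = -(((Matrix.of fun _ _ => (1 : ZMod 2)) *ᵥ x) v) := congrFun hx2 v
          _ = -(∑ i, x i) := by
              simp only [Matrix.mulVec, dotProduct, Matrix.of_apply, one_mul]
          _ = ((∑ i, x i) • (fun _ => 1 : Fin 15 → ZMod 2)) v := by
              rw [CharTwo.neg_eq, Pi.smul_apply, smul_eq_mul, mul_one]
      rw [hxeq]
      exact Submodule.smul_mem _ _ (Submodule.subset_span rfl)
    · rw [Submodule.span_le, Set.singleton_subset_iff]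
      exact hone
  refine ⟨?_, hker⟩
  have hrank : A.rank + Module.finrank (ZMod 2) (LinearMap.ker A.mulVecLin) = 15 := by
    have h := LinearMap.finrank_range_add_finrank_ker (Matrix.mulVecLin A)
    rw [Module.finrank_fintype_fun_eq_card, Fintype.card_fin] at h
    rw [show A.rank = Module.finrank (ZMod 2) (LinearMap.range A.mulVecLin) from rfl]
    exact h
  have hdim : Module.finrank (ZMod 2) (LinearMap.ker A.mulVecLin) = 1 := by
    rw [hker, finrank_span_singleton]
    intro h
    have := congrFun h 0
    simp at this
  omega
end

section
/- Let H be a simple graph on Fin 15 with H.IsSRGWith 15 8 4 4. Then the adjacency matrix H.adjMatrix (ZMod 2) is nilpotent; equivalently, the characteristic polynomial of H.adjMatrix (ZMod 2) equals X^15 in (ZMod 2)[X]. -/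
open Polynomial

theorem SimpleGraph.IsSRGWith.adjMatrix_sq_eq_zero {V R : Type*} [Fintype V] [DecidableEq V]
    [Semiring R] {G : SimpleGraph V} [DecidableRel G.Adj] {n k ℓ μ : ℕ}
    (h : G.IsSRGWith n k ℓ μ) (hk : (k : R) = 0) (hℓ : (ℓ : R) = 0) (hμ : (μ : R) = 0) :
    G.adjMatrix R ^ 2 = 0 := by
  rw [h.matrix_eq, ← Nat.cast_smul_eq_nsmul R k, ← Nat.cast_smul_eq_nsmul R ℓ,
    ← Nat.cast_smul_eq_nsmul R μ, hk, hℓ, hμ]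
  simp only [zero_smul, add_zero]

theorem Matrix.charpoly_eq_X_pow_card_of_isNilpotent {n R : Type*} [Fintype n] [DecidableEq n]
    [CommRing R] [IsReduced R] {M : Matrix n n R} (hM : IsNilpotent M) :
    M.charpoly = X ^ Fintype.card n := by
  have h := Polynomial.isNilpotent_iff.mp (Matrix.isNilpotent_charpoly_sub_pow_of_isNilpotent hM)
  exact sub_eq_zero.mp <| Polynomial.ext fun i => by simpa using (h i).eq_zero

/-- The adjacency matrix of a strongly regular graph with parameters
`(15,8,4,4)` (e.g. the triangular graph `T(6)`) is nilpotent over `ZMod 2`;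
equivalently its characteristic polynomial reduces to `X^15` mod 2. -/
theorem stmt_18 (H : SimpleGraph (Fin 15)) [DecidableRel H.Adj]
    (hH : H.IsSRGWith 15 8 4 4) :
    IsNilpotent (H.adjMatrix (ZMod 2)) ∧
    (H.adjMatrix (ZMod 2)).charpoly = X ^ 15 := by
  have hnil : IsNilpotent (H.adjMatrix (ZMod 2)) :=
    ⟨2, hH.adjMatrix_sq_eq_zero (by decide) (by decide) (by decide)⟩
  exact ⟨hnil, by simpa using Matrix.charpoly_eq_X_pow_card_of_isNilpotent hnil⟩
end
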